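/- arXiv:2311.14555 — 2 statements merged into one kernel-verified Lean document; each statement's English description precedes it below -/
import Mathlib

section
/- Let c = −(4/15)e₃, and for R > 0 and t ≥ 0 define ρ_R(t,x) = R^{-3} ρ_{1,0}(x/R − tc/(|B(0,1)| R²)) where ρ_{1,0} = 1_{B(0,1)}/|B(0,1)|. Then for every t ≥ 0, W₁(ρ_R(t), ρ_1(t)) ≥ (4/15) · (t/|B(0,1)|) · |1/R − 1|. In particular, for any fixed R ≠ 1 this distance tends to infinity as t → ∞. -/
/-!
For `R > 0`, `ρR R t` is the uniform density on the ball of radius `R` around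
`waveCenter R t = (t / (ω₁ R)) • cTS`, so integrating a function against it is averaging it over
that ball. By the reflection symmetry of the ball, the average of the 1-Lipschitz coordinate
`x ↦ x 2` is its value at the centre, which gives the lower bound; the supremum defining `W1` is
finite because the average of a 1-Lipschitz `f` over `ball b R` lies within `R + ‖b‖` of `f 0`.
-/

open MeasureTheory Real Filter

noncomputable abbrev E3 := EuclideanSpace ℝ (Fin 3)

/-- 1-Wasserstein distance between densities, via Kantorovich–Rubinstein duality. -/
noncomputable def W1 (μ ν : E3 → ℝ) : ℝ :=
  ⨆ f : {f : E3 → ℝ // LipschitzWith 1 f}, |(∫ x, f.1 x * μ x) - ∫ x, f.1 x * ν x|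

noncomputable def ω₁ : ℝ := (volume (Metric.ball (0:E3) 1)).toReal

noncomputable def cTS : E3 := (-(4/15 : ℝ)) • (EuclideanSpace.single (2 : Fin 3) (1:ℝ))

/-- traveling-wave solution of radius R at time t -/
noncomputable def ρR (R t : ℝ) : E3 → ℝ :=
  fun x => (R ^ 3)⁻¹ *
    (Set.indicator (Metric.ball (0:E3) 1) 1 (R⁻¹ • x - (t / (ω₁ * R ^ 2)) • cTS) / ω₁)

open Metric Set

lemma two_smul_sub_mem_ball_iff {E : Type*} [SeminormedAddCommGroup E] [NormedSpace ℝ E]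
    {b x : E} {R : ℝ} : (2 : ℝ) • b - x ∈ ball b R ↔ x ∈ ball b R := by
  rw [mem_ball, mem_ball, dist_comm x, dist_eq_norm, dist_eq_norm, two_smul,
    show b + b - x - b = b - x by abel]

section BallAverage

variable {E F : Type*} [NormedAddCommGroup E] [NormedSpace ℝ E] [FiniteDimensional ℝ E]
  [MeasurableSpace E] [BorelSpace E] (μ : Measure E) [μ.IsAddHaarMeasure]
  [NormedAddCommGroup F]

lemma integrableOn_ball_of_continuous {f : E → F} (hf : Continuous f) (b : E) (R : ℝ) :
    IntegrableOn f (ball b R) μ :=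
  (hf.locallyIntegrable.integrableOn_isCompact (isCompact_closedBall b R)).mono_set
    ball_subset_closedBall

variable [NormedSpace ℝ F] [CompleteSpace F]

-- The reflection `x ↦ 2b - x` preserves both `μ` and the ball.
lemma setAverage_ball_continuousLinearMap (L : E →L[ℝ] F) (b : E) {R : ℝ} (hR : 0 < R) :
    ⨍ x in ball b R, L x ∂μ = L b := by
  have hvol : μ.real (ball b R) ≠ 0 :=
    ENNReal.toReal_ne_zero.mpr ⟨(measure_ball_pos μ b hR).ne', measure_ball_lt_top.ne⟩
  have hreflect : ∫ x in ball b R, L x ∂μ = ∫ x in ball b R, (L ((2 : ℝ) • b) - L x) ∂μ := by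
    rw [← integral_indicator measurableSet_ball, ← integral_indicator measurableSet_ball,
      ← integral_sub_left_eq_self _ μ ((2 : ℝ) • b)]
    congr 1 with x
    by_cases hx : x ∈ ball b R
    · simp [hx, two_smul_sub_mem_ball_iff.mpr hx]
    · simp [hx, mt two_smul_sub_mem_ball_iff.mp hx]
  have hint := integrableOn_ball_of_continuous μ L.continuous b R
  have hconst : IntegrableOn (fun _ => L ((2 : ℝ) • b)) (ball b R) μ :=
    integrableOn_const measure_ball_lt_top.ne
  rw [integral_sub hconst hint, setIntegral_const,
    map_smul, eq_sub_iff_add_eq, ← two_smul ℝ, smul_comm] at hreflect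
  rw [setAverage_eq, (smul_right_injective F two_ne_zero hreflect), inv_smul_smul₀ hvol]

lemma dist_setAverage_ball_le {f : E → F} {K : NNReal} (hf : LipschitzWith K f) (a b : E)
    {R : ℝ} (hR : 0 < R) : dist (⨍ x in ball b R, f x ∂μ) (f a) ≤ K * (R + dist b a) := by
  rw [← mem_closedBall]
  refine (convex_closedBall _ _).set_average_mem isClosed_closedBall
    (measure_ball_pos μ b hR).ne' measure_ball_lt_top.ne
    (ae_restrict_of_forall_mem measurableSet_ball fun x hx => ?_)
    (integrableOn_ball_of_continuous μ hf.continuous b R)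
  calc dist (f x) (f a) ≤ K * dist x a := hf.dist_le_mul x a
    _ ≤ K * (R + dist b a) := by
      gcongr
      exact (dist_triangle x b a).trans (by gcongr; exact (mem_ball.mp hx).le)

end BallAverage

lemma ω₁_pos : 0 < ω₁ :=
  ENNReal.toReal_pos (measure_ball_pos volume 0 one_pos).ne' measure_ball_lt_top.ne

lemma volume_real_ball_E3 (b : E3) {R : ℝ} (hR : 0 < R) :
    volume.real (ball b R) = R ^ 3 * ω₁ := by
  rw [measureReal_def, Measure.addHaar_ball volume b hR.le, ENNReal.toReal_mul,
    ENNReal.toReal_ofReal (by positivity), ω₁, finrank_euclideanSpace_fin]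

noncomputable def waveCenter (R t : ℝ) : E3 := (t / (ω₁ * R)) • cTS

lemma mem_ball_iff_mem_ball_waveCenter {R : ℝ} (hR : 0 < R) (t : ℝ) (x : E3) :
    R⁻¹ • x - (t / (ω₁ * R ^ 2)) • cTS ∈ ball (0 : E3) 1 ↔ x ∈ ball (waveCenter R t) R := by
  have hrescale : R⁻¹ • x - (t / (ω₁ * R ^ 2)) • cTS = R⁻¹ • (x - waveCenter R t) := by
    rw [waveCenter, smul_sub, smul_smul]
    congr 2
    field_simp
  rw [hrescale, mem_ball_zero_iff, norm_smul, norm_inv, Real.norm_of_nonneg hR.le,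
    inv_mul_lt_iff₀ hR, mul_one, mem_ball, dist_eq_norm]

lemma integral_mul_ρR (f : E3 → ℝ) {R : ℝ} (hR : 0 < R) (t : ℝ) :
    ∫ x, f x * ρR R t x = ⨍ x in ball (waveCenter R t) R, f x := by
  have hdensity : (fun x => f x * ρR R t x) =
      (ball (waveCenter R t) R).indicator fun x => (R ^ 3 * ω₁)⁻¹ * f x := by
    ext x
    by_cases hx : x ∈ ball (waveCenter R t) R
    · simp only [ρR, (mem_ball_iff_mem_ball_waveCenter hR t x).mpr hx, hx, indicator_of_mem,
        Pi.one_apply]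
      ring
    · simp [ρR, hx, mt (mem_ball_iff_mem_ball_waveCenter hR t x).mp hx]
  rw [hdensity, integral_indicator measurableSet_ball, integral_const_mul, setAverage_eq,
    volume_real_ball_E3 _ hR, smul_eq_mul]

lemma EuclideanSpace.lipschitzWith_apply {ι : Type*} [Fintype ι] (i : ι) :
    LipschitzWith 1 fun x : EuclideanSpace ℝ ι => x i :=
  .of_dist_le_mul fun x y => by
    simpa [dist_eq_norm] using PiLp.norm_apply_le (x - y) i

lemma integral_coord_mul_ρR {R : ℝ} (hR : 0 < R) (t : ℝ) :
    ∫ x, x 2 * ρR R t x = -(4 / 15) * (t / (ω₁ * R)) := by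
  rw [integral_mul_ρR _ hR]
  refine (setAverage_ball_continuousLinearMap volume
    (EuclideanSpace.proj (2 : Fin 3)) _ hR).trans ?_
  simp [waveCenter, cTS, mul_comm]

lemma bddAbove_W1_ρR {R R' : ℝ} (hR : 0 < R) (hR' : 0 < R') (t : ℝ) :
    BddAbove (range fun f : {f : E3 → ℝ // LipschitzWith 1 f} =>
      |(∫ x, f.1 x * ρR R t x) - ∫ x, f.1 x * ρR R' t x|) := by
  refine ⟨(R + ‖waveCenter R t‖) + (R' + ‖waveCenter R' t‖), ?_⟩
  rintro _ ⟨⟨f, hf⟩, rfl⟩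
  have h := dist_setAverage_ball_le volume hf 0 (waveCenter R t) hR
  have h' := dist_setAverage_ball_le volume hf 0 (waveCenter R' t) hR'
  simp only [NNReal.coe_one, one_mul, dist_zero_right] at h h'
  dsimp only
  rw [integral_mul_ρR _ hR, integral_mul_ρR _ hR', ← Real.dist_eq]
  exact (dist_triangle_right _ _ (f 0)).trans (add_le_add h h')

lemma le_W1_ρR {R : ℝ} (hR : 0 < R) {t : ℝ} (ht : 0 ≤ t) :
    (4 / 15) * (t / ω₁) * |1 / R - 1| ≤ W1 (ρR R t) (ρR 1 t) := by
  have hω := ω₁_pos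
  calc (4 / 15) * (t / ω₁) * |1 / R - 1|
      = |(∫ x, x 2 * ρR R t x) - ∫ x, x 2 * ρR 1 t x| := by
        rw [integral_coord_mul_ρR hR, integral_coord_mul_ρR one_pos,
          show -(4 / 15) * (t / (ω₁ * R)) - -(4 / 15) * (t / (ω₁ * 1))
            = (4 / 15) * (t / ω₁) * -(1 / R - 1) by field_simp; ring,
          abs_mul, abs_neg, abs_of_nonneg (by positivity : 0 ≤ (4 / 15) * (t / ω₁))]
    _ ≤ W1 (ρR R t) (ρR 1 t) :=
      le_ciSup (bddAbove_W1_ρR hR one_pos t) ⟨_, EuclideanSpace.lipschitzWith_apply 2⟩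

/-- W₁(ρ_R(t), ρ_1(t)) ≥ (4/15)(t/|B(0,1)|)|1/R − 1|, diverging as t → ∞ for R ≠ 1. -/
theorem stmt4 :
    (∀ R : ℝ, 0 < R → ∀ t : ℝ, 0 ≤ t →
      (4/15) * (t / ω₁) * |1/R - 1| ≤ W1 (ρR R t) (ρR 1 t))
    ∧ ∀ R : ℝ, 0 < R → R ≠ 1 →
        Tendsto (fun t : ℝ => W1 (ρR R t) (ρR 1 t)) atTop atTop := by
  refine ⟨fun R hR t ht => le_W1_ρR hR ht, fun R hR hR1 => ?_⟩
  have hslope : 0 < (4 / 15) / ω₁ * |1 / R - 1| := by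
    have hω := ω₁_pos
    have hR1' : 1 / R - 1 ≠ 0 := by
      rw [sub_ne_zero, ne_eq, div_eq_one_iff_eq hR.ne']
      exact Ne.symm hR1
    positivity
  refine tendsto_atTop_mono' atTop ?_ (tendsto_id.atTop_mul_const hslope)
  filter_upwards [eventually_ge_atTop 0] with t ht
  calc id t * ((4 / 15) / ω₁ * |1 / R - 1|) = (4 / 15) * (t / ω₁) * |1 / R - 1| := by
        rw [id]; ring
    _ ≤ W1 (ρR R t) (ρR 1 t) := le_W1_ρR hR ht
end

section
/- Define K(θ) = −(1/(8π)) ∫₀^π ∫₀^{2π} √(γ(θ, θ̄, φ)) sin θ̄ cos θ̄ dφ dθ̄, where γ(θ, θ̄, φ) = 2 − 2 sin θ sin θ̄ cos φ − 2 cos θ cos θ̄. Then K(θ) = (2/15) cos θ for all θ ∈ [0, π]. -/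
/-!
Write `u = (cos θ, sin θ, 0)` and `ω(t, φ) = (cos t, sin t cos φ, sin t sin φ)`, so that
`√γ = |u - ω|` and the double integral is `∫_{𝕊²} |u - ω| ω₁ dσ(ω)` in spherical coordinates.
The surface measure is rotation invariant: realising a surface integral as the volume integral of
an extension of the integrand to the unit ball, this follows from the invariance of Lebesgue
measure. Rotating by `θ` in the `(x₁, x₂)`-plane moves `u` to the pole `e₁` and turns the weight
`ω₁` into `cos θ ω₁ - sin θ ω₂`; the `ω₂`-part integrates to zero over `φ`, and what is left is
`2π cos θ ∫₀^π √(2 - 2 cos t) sin t cos t dt = -(16π/15) cos θ`.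
-/

open MeasureTheory Real Set

noncomputable section

namespace SphericalCoord

variable {E : Type*} [NormedAddCommGroup E] [NormedSpace ℝ E]

def sphereCoord (q : ℝ × ℝ) : ℝ × ℝ × ℝ :=
  (cos q.1, sin q.1 * cos q.2, sin q.1 * sin q.2)

def sphereTarget : Set (ℝ × ℝ) := Ioo 0 π ×ˢ Ioo (-π) π

def sphericalCoordSymm (p : ℝ × ℝ × ℝ) : ℝ × ℝ × ℝ := p.1 • sphereCoord p.2

def sphericalCoord (x : ℝ × ℝ × ℝ) : ℝ × ℝ × ℝ :=
  let q := polarCoord x.2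
  let p := polarCoord (x.1, q.1)
  (p.1, p.2, q.2)

private abbrev assocL : ((ℝ × ℝ) × ℝ) ≃L[ℝ] ℝ × ℝ × ℝ := ContinuousLinearEquiv.prodAssoc ℝ ℝ ℝ ℝ

lemma sphericalCoordSymm_apply (r t φ : ℝ) :
    sphericalCoordSymm (r, t, φ) = (r * cos t, r * sin t * cos φ, r * sin t * sin φ) := by
  simp [sphericalCoordSymm, sphereCoord, mul_assoc]

lemma sphericalCoordSymm_eq_comp : sphericalCoordSymm =
    Prod.map id polarCoord.symm ∘ assocL ∘ Prod.map polarCoord.symm id ∘ assocL.symm := by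
  funext ⟨r, t, φ⟩
  exact sphericalCoordSymm_apply r t φ

def fderivSphericalCoordSymm (p : ℝ × ℝ × ℝ) : ℝ × ℝ × ℝ →L[ℝ] ℝ × ℝ × ℝ :=
  (ContinuousLinearMap.id ℝ ℝ).prodMap (fderivPolarCoordSymm (p.1 * sin p.2.1, p.2.2)) ∘L
    (assocL : (ℝ × ℝ) × ℝ →L[ℝ] ℝ × ℝ × ℝ) ∘L
      (fderivPolarCoordSymm (p.1, p.2.1)).prodMap (ContinuousLinearMap.id ℝ ℝ) ∘L
        (assocL.symm : ℝ × ℝ × ℝ →L[ℝ] (ℝ × ℝ) × ℝ)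

lemma hasFDerivAt_sphericalCoordSymm (p : ℝ × ℝ × ℝ) :
    HasFDerivAt sphericalCoordSymm (fderivSphericalCoordSymm p) p := by
  have hfirst := assocL.hasFDerivAt.comp p
    ((HasFDerivAt.prodMap _ (hasFDerivAt_polarCoord_symm _) (hasFDerivAt_id _)).comp p
      assocL.symm.hasFDerivAt)
  have hsecond := HasFDerivAt.prodMap (p.1 * cos p.2.1, p.1 * sin p.2.1, p.2.2)
    (hasFDerivAt_id _) (hasFDerivAt_polarCoord_symm _)
  rw [sphericalCoordSymm_eq_comp]
  exact hsecond.comp p hfirst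

lemma det_fderivSphericalCoordSymm (p : ℝ × ℝ × ℝ) :
    (fderivSphericalCoordSymm p).det = p.1 ^ 2 * sin p.2.1 := by
  let B : (ℝ × ℝ) × ℝ →ₗ[ℝ] (ℝ × ℝ) × ℝ :=
    ((fderivPolarCoordSymm (p.1, p.2.1)).prodMap (ContinuousLinearMap.id ℝ ℝ) : _)
  have hconj : LinearMap.det ((assocL : (ℝ × ℝ) × ℝ →ₗ[ℝ] ℝ × ℝ × ℝ) ∘ₗ B ∘ₗ
      (assocL.symm : ℝ × ℝ × ℝ →ₗ[ℝ] (ℝ × ℝ) × ℝ)) = LinearMap.det B :=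
    LinearMap.det_conj B assocL.toLinearEquiv
  have hpolar := det_fderivPolarCoordSymm
  simp only [fderivSphericalCoordSymm, ContinuousLinearMap.det,
    ContinuousLinearMap.toLinearMap_comp, LinearMap.det_comp] at hpolar ⊢
  -- the two coercions of `assocL.symm` to a linear map agree only up to unfolding
  erw [hconj]
  simp only [B, ContinuousLinearMap.coe_prodMap, LinearMap.det_prodMap,
    ContinuousLinearMap.coe_id, LinearMap.det_id, hpolar]
  ring

lemma sphericalCoord_sphericalCoordSymm {p : ℝ × ℝ × ℝ} (hp : p ∈ Ioi 0 ×ˢ sphereTarget) :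
    sphericalCoord (sphericalCoordSymm p) = p := by
  obtain ⟨r, t, φ⟩ := p
  obtain ⟨hr, ⟨ht₀, htπ⟩, hφ⟩ := hp
  have hρφ : (r * sin t, φ) ∈ polarCoord.target :=
    ⟨mul_pos hr (sin_pos_of_pos_of_lt_pi ht₀ htπ), hφ⟩
  have hrt : (r, t) ∈ polarCoord.target := ⟨hr, by linarith [pi_pos], htπ⟩
  have h₁ := polarCoord.right_inv hρφ
  have h₂ := polarCoord.right_inv hrt
  simp only [polarCoord_symm_apply] at h₁ h₂
  simp [sphericalCoord, sphericalCoordSymm_apply, h₁, h₂]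

lemma sphericalCoordSymm_sphericalCoord {x : ℝ × ℝ × ℝ} (hx : x.2 ∈ polarCoord.source) :
    sphericalCoord x ∈ Ioi 0 ×ˢ sphereTarget ∧ sphericalCoordSymm (sphericalCoord x) = x := by
  obtain ⟨a, w⟩ := x
  set q := polarCoord w
  have hq : q ∈ polarCoord.target := polarCoord.map_source hx
  have haρ : (a, q.1) ∈ polarCoord.source := Or.inr hq.1.ne'
  set p := polarCoord (a, q.1)
  have hp : p ∈ polarCoord.target := polarCoord.map_source haρ
  have hw : polarCoord.symm q = w := polarCoord.left_inv hx
  have haρ' : polarCoord.symm p = (a, q.1) := polarCoord.left_inv haρ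
  simp only [polarCoord_symm_apply, Prod.ext_iff] at hw haρ'
  simp only [polarCoord_target, mem_prod, mem_Ioi, mem_Ioo] at hp hq
  have ht : 0 < p.2 := by
    by_contra! h
    have := sin_nonpos_of_nonpos_of_neg_pi_le h hp.2.1.le
    nlinarith [hp.1, hq.1, haρ'.2]
  refine ⟨⟨hp.1, ⟨ht, hp.2.2⟩, hq.2⟩, ?_⟩
  change sphericalCoordSymm (p.1, p.2, q.2) = (a, w)
  rw [sphericalCoordSymm_apply, haρ'.1, haρ'.2, hw.1, hw.2]

theorem integral_comp_sphericalCoordSymm (g : ℝ × ℝ × ℝ → E) :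
    ∫ p in Ioi 0 ×ˢ sphereTarget, (p.1 ^ 2 * sin p.2.1) • g (sphericalCoordSymm p) = ∫ x, g x := by
  -- instance search does not see through `volume = volume.prod volume`
  have : (volume : Measure (ℝ × ℝ × ℝ)).IsAddHaarMeasure := Measure.prod.instIsAddHaarMeasure _ _
  have hD : MeasurableSet (Ioi (0 : ℝ) ×ˢ sphereTarget) :=
    measurableSet_Ioi.prod (measurableSet_Ioo.prod measurableSet_Ioo)
  have hinj : InjOn sphericalCoordSymm (Ioi 0 ×ˢ sphereTarget) :=
    LeftInvOn.injOn fun _ hp => sphericalCoord_sphericalCoordSymm hp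
  have himage : sphericalCoordSymm '' (Ioi 0 ×ˢ sphereTarget) =ᵐ[volume] univ := by
    refine ae_eq_univ.2 (measure_mono_null (t := univ ×ˢ polarCoord.sourceᶜ) ?_ ?_)
    · intro x hx
      refine ⟨mem_univ _, fun hsource => hx ?_⟩
      obtain ⟨hmem, hx⟩ := sphericalCoordSymm_sphericalCoord hsource
      exact ⟨_, hmem, hx⟩
    · rw [Measure.volume_eq_prod, Measure.prod_prod, ae_eq_univ.1 polarCoord_source_ae_eq_univ,
        mul_zero]
  rw [← setIntegral_univ (f := g), ← setIntegral_congr_set himage,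
    integral_image_eq_integral_abs_det_fderiv_smul volume hD
      (fun p _ => (hasFDerivAt_sphericalCoordSymm p).hasFDerivWithinAt) hinj]
  refine (setIntegral_congr_fun hD fun p ⟨hr, ht, _⟩ => ?_).symm
  rw [det_fderivSphericalCoordSymm,
    abs_of_pos (mul_pos (pow_pos hr 2) (sin_pos_of_pos_of_lt_pi ht.1 ht.2))]

lemma continuous_sphereCoord : Continuous sphereCoord := by
  unfold sphereCoord; fun_prop

lemma periodic_sphereCoord (t : ℝ) : Function.Periodic (fun φ => sphereCoord (t, φ)) (2 * π) :=
  fun φ => by simp [sphereCoord]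

lemma setIntegral_sphereTarget_eq_intervalIntegral {F : ℝ × ℝ → E} (hF : Continuous F)
    (hper : ∀ t, Function.Periodic (fun φ => F (t, φ)) (2 * π)) :
    ∫ q in sphereTarget, F q = ∫ t in (0)..π, ∫ φ in (0)..2 * π, F (t, φ) := by
  have hint : IntegrableOn F sphereTarget :=
    (hF.continuousOn.integrableOn_compact (isCompact_Icc.prod isCompact_Icc)).mono_set
      (prod_mono Ioo_subset_Icc_self Ioo_subset_Icc_self)
  rw [sphereTarget, Measure.volume_eq_prod, setIntegral_prod _ hint,
    intervalIntegral.integral_of_le pi_pos.le, integral_Ioc_eq_integral_Ioo]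
  refine setIntegral_congr_fun measurableSet_Ioo fun t _ => ?_
  have hshift := (hper t).intervalIntegral_add_eq (-π) 0
  rw [zero_add, show -π + 2 * π = π by ring] at hshift
  rw [← integral_Ioc_eq_integral_Ioo, ← intervalIntegral.integral_of_le (by linarith [pi_pos]),
    hshift]

def radius (x : ℝ × ℝ × ℝ) : ℝ := √(x.1 ^ 2 + x.2.1 ^ 2 + x.2.2 ^ 2)

lemma radius_smul_sphereCoord {r : ℝ} (hr : 0 ≤ r) (q : ℝ × ℝ) :
    radius (r • sphereCoord q) = r := by
  conv_rhs => rw [← sqrt_sq hr]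
  rw [radius]
  congr 1
  simp only [sphereCoord, Prod.smul_mk, smul_eq_mul]
  linear_combination (r * sin q.1) ^ 2 * sin_sq_add_cos_sq q.2 + r ^ 2 * sin_sq_add_cos_sq q.1

def rotation2 (θ : ℝ) : ℝ × ℝ ≃ᵐ ℝ × ℝ :=
  Complex.measurableEquivRealProd.symm.trans
    ((rotation (Circle.exp θ)).toMeasurableEquiv.trans Complex.measurableEquivRealProd)

lemma rotation2_apply (θ : ℝ) (w : ℝ × ℝ) :
    rotation2 θ w = (cos θ * w.1 - sin θ * w.2, sin θ * w.1 + cos θ * w.2) := by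
  simp [rotation2, Complex.measurableEquivRealProd, Circle.coe_exp, Complex.exp_mul_I,
    ← Complex.ofReal_cos, ← Complex.ofReal_sin, add_comm]

lemma measurePreserving_rotation2 (θ : ℝ) : MeasurePreserving (rotation2 θ) :=
  Complex.volume_preserving_equiv_real_prod.comp
    ((rotation (Circle.exp θ)).measurePreserving.comp
      Complex.volume_preserving_equiv_real_prod.symm)

def rotate (θ : ℝ) : ℝ × ℝ × ℝ ≃ᵐ ℝ × ℝ × ℝ :=
  MeasurableEquiv.prodAssoc.symm.trans
    (((rotation2 θ).prodCongr (MeasurableEquiv.refl ℝ)).trans MeasurableEquiv.prodAssoc)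

lemma rotate_apply (θ : ℝ) (x : ℝ × ℝ × ℝ) :
    rotate θ x = (cos θ * x.1 - sin θ * x.2.1, sin θ * x.1 + cos θ * x.2.1, x.2.2) := by
  change ((rotation2 θ (x.1, x.2.1)).1, (rotation2 θ (x.1, x.2.1)).2, x.2.2) = _
  rw [rotation2_apply]

lemma measurePreserving_rotate (θ : ℝ) : MeasurePreserving (rotate θ) :=
  volume_preserving_prodAssoc.comp
    (((measurePreserving_rotation2 θ).prod (MeasurePreserving.id volume)).comp
      volume_preserving_prodAssoc.symm)

lemma continuous_rotate (θ : ℝ) : Continuous (rotate θ) := by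
  rw [show ⇑(rotate θ) = _ from funext (rotate_apply θ)]
  fun_prop

lemma radius_rotate (θ : ℝ) (x : ℝ × ℝ × ℝ) : radius (rotate θ x) = radius x := by
  rw [radius, radius, rotate_apply]
  congr 1
  linear_combination (x.1 ^ 2 + x.2.1 ^ 2) * sin_sq_add_cos_sq θ

lemma rotate_smul (θ c : ℝ) (x : ℝ × ℝ × ℝ) : rotate θ (c • x) = c • rotate θ x := by
  simp only [rotate_apply, Prod.smul_fst, Prod.smul_snd, smul_eq_mul, Prod.smul_mk]
  ext <;> simp only <;> ring

/-- The weight `|x|⁻²` cancels the Jacobian `r²` of spherical coordinates, so that the radial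
integral is `∫₀¹ dr = 1`. -/
def ballExtension (f : ℝ × ℝ × ℝ → E) (x : ℝ × ℝ × ℝ) : E :=
  if radius x < 1 then (radius x ^ 2)⁻¹ • f ((radius x)⁻¹ • x) else 0

theorem integral_ballExtension (f : ℝ × ℝ × ℝ → E) :
    ∫ x, ballExtension f x = ∫ q in sphereTarget, sin q.1 • f (sphereCoord q) := by
  have hD : MeasurableSet (Ioi (0 : ℝ) ×ˢ sphereTarget) :=
    measurableSet_Ioi.prod (measurableSet_Ioo.prod measurableSet_Ioo)
  have hsplit : ∀ p ∈ Ioi (0 : ℝ) ×ˢ sphereTarget,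
      (p.1 ^ 2 * sin p.2.1) • ballExtension f (sphericalCoordSymm p) =
        (Iio 1).indicator (fun _ => (1 : ℝ)) p.1 • (sin p.2.1 • f (sphereCoord p.2)) := by
    rintro ⟨r, q⟩ ⟨hr : 0 < r, -⟩
    simp only [ballExtension, sphericalCoordSymm, radius_smul_sphereCoord hr.le, indicator,
      mem_Iio]
    split_ifs
    · rw [inv_smul_smul₀ hr.ne', smul_smul, one_smul]
      congr 1
      field_simp
    · simp
  have hradial : ∫ r in Ioi (0 : ℝ), (Iio 1).indicator (fun _ => (1 : ℝ)) r = 1 := by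
    rw [integral_indicator measurableSet_Iio, Measure.restrict_restrict measurableSet_Iio]
    simp [Iio_inter_Ioi]
  rw [← integral_comp_sphericalCoordSymm, setIntegral_congr_fun hD hsplit, Measure.volume_eq_prod,
    ← Measure.prod_restrict, integral_prod_smul (fun r => (Iio 1).indicator (fun _ => (1 : ℝ)) r)
      (fun q => sin q.1 • f (sphereCoord q)), hradial, one_smul]

theorem integral_sphere_comp_rotate (f : ℝ × ℝ × ℝ → E) (θ : ℝ) :
    ∫ q in sphereTarget, sin q.1 • f (rotate θ (sphereCoord q)) =
      ∫ q in sphereTarget, sin q.1 • f (sphereCoord q) := by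
  have hcomm : ∀ x, ballExtension f (rotate θ x) = ballExtension (f ∘ rotate θ) x := fun x => by
    simp only [ballExtension, radius_rotate, rotate_smul, Function.comp_apply]
  calc ∫ q in sphereTarget, sin q.1 • f (rotate θ (sphereCoord q))
      = ∫ x, ballExtension (f ∘ rotate θ) x := (integral_ballExtension (f ∘ rotate θ)).symm
    _ = ∫ x, ballExtension f (rotate θ x) := by simp only [hcomm]
    _ = ∫ q in sphereTarget, sin q.1 • f (sphereCoord q) := by
      rw [(measurePreserving_rotate θ).integral_comp', integral_ballExtension]

/-- For a unit vector `v`, this is `|u - v| v₁` with `u = (cos θ, sin θ, 0)`. -/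
def zonalKernel (θ : ℝ) (v : ℝ × ℝ × ℝ) : ℝ := √(2 - 2 * (cos θ * v.1 + sin θ * v.2.1)) * v.1

lemma continuous_zonalKernel (θ : ℝ) : Continuous (zonalKernel θ) := by
  unfold zonalKernel; fun_prop

lemma sin_smul_zonalKernel_sphereCoord (θ t φ : ℝ) :
    sin t • zonalKernel θ (sphereCoord (t, φ)) =
      √(2 - 2 * sin θ * sin t * cos φ - 2 * cos θ * cos t) * sin t * cos t := by
  rw [zonalKernel, sphereCoord, smul_eq_mul,
    show 2 - 2 * (cos θ * cos t + sin θ * (sin t * cos φ)) =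
      2 - 2 * sin θ * sin t * cos φ - 2 * cos θ * cos t by ring]
  ring

lemma setIntegral_sphereTarget_zonalKernel (θ : ℝ) {g : ℝ × ℝ × ℝ → ℝ × ℝ × ℝ}
    (hg : Continuous g) :
    ∫ q in sphereTarget, sin q.1 • zonalKernel θ (g (sphereCoord q)) =
      ∫ t in (0)..π, ∫ φ in (0)..2 * π, sin t • zonalKernel θ (g (sphereCoord (t, φ))) :=
  setIntegral_sphereTarget_eq_intervalIntegral
    ((continuous_sin.comp continuous_fst).smul
      ((continuous_zonalKernel θ).comp (hg.comp continuous_sphereCoord)))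
    fun t φ => by simp only [periodic_sphereCoord t φ]

lemma zonalKernel_rotate (θ : ℝ) (v : ℝ × ℝ × ℝ) :
    zonalKernel θ (rotate θ v) = √(2 - 2 * v.1) * (cos θ * v.1 - sin θ * v.2.1) := by
  have hinner : cos θ * (rotate θ v).1 + sin θ * (rotate θ v).2.1 = v.1 := by
    rw [rotate_apply]
    linear_combination v.1 * sin_sq_add_cos_sq θ
  rw [zonalKernel, hinner, rotate_apply]

lemma integral_zonalKernel_rotate_sphereCoord (θ t : ℝ) :
    ∫ φ in (0)..2 * π, sin t • zonalKernel θ (rotate θ (sphereCoord (t, φ))) =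
      2 * π * cos θ * (√(2 - 2 * cos t) * sin t * cos t) := by
  simp only [zonalKernel_rotate, sphereCoord, smul_eq_mul]
  have hlin : ∀ φ, sin t * (√(2 - 2 * cos t) * (cos θ * cos t - sin θ * (sin t * cos φ))) =
      cos θ * (√(2 - 2 * cos t) * sin t * cos t) - sin θ * √(2 - 2 * cos t) * sin t ^ 2 * cos φ :=
    fun φ => by ring
  simp only [hlin]
  rw [intervalIntegral.integral_sub (by simp) (by apply Continuous.intervalIntegrable; fun_prop)]
  simp only [intervalIntegral.integral_const_mul, intervalIntegral.integral_const, sub_zero,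
    smul_eq_mul, integral_cos, sin_two_pi, sin_zero, sub_self, mul_zero]
  ring

lemma sqrt_two_sub_two_cos {t : ℝ} (h₀ : 0 ≤ t) (h₁ : t ≤ 2 * π) :
    √(2 - 2 * cos t) = 2 * sin (t / 2) := by
  rw [sin_half_eq_sqrt h₀ h₁, show 2 - 2 * cos t = 2 ^ 2 * ((1 - cos t) / 2) by ring,
    sqrt_mul (by positivity), sqrt_sq zero_le_two]

lemma integral_sqrt_two_sub_two_cos_mul_sin_mul_cos :
    ∫ t in (0)..π, √(2 - 2 * cos t) * sin t * cos t = -(8 / 15) := by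
  -- `√(2 - 2 cos t) = 2 sin (t / 2)` and `sin (t / 2) sin (2t) = (cos (3t / 2) - cos (5t / 2)) / 2`
  have hF : ∀ t, HasDerivAt (fun t => sin (3 / 2 * t) / 3 - sin (5 / 2 * t) / 5)
      (2 * sin (t / 2) * sin t * cos t) t := fun t => by
    have hlin : ∀ c : ℝ, HasDerivAt (fun t => c * t) c t := fun c => by
      simpa using (hasDerivAt_id t).const_mul c
    have hprod := cos_sub_cos (3 / 2 * t) (5 / 2 * t)
    rw [show (3 / 2 * t + 5 / 2 * t) / 2 = 2 * t by ring,
      show (3 / 2 * t - 5 / 2 * t) / 2 = -(t / 2) by ring, sin_neg, sin_two_mul] at hprod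
    exact (((hlin _).sin.div_const 3).sub ((hlin _).sin.div_const 5)).congr_deriv
      (by linear_combination hprod / 2)
  rw [intervalIntegral.integral_congr (g := fun t => 2 * sin (t / 2) * sin t * cos t),
    intervalIntegral.integral_eq_sub_of_hasDerivAt (fun t _ => hF t)
      (by apply Continuous.intervalIntegrable; fun_prop)]
  · rw [show 3 / 2 * π = π / 2 + π by ring, show 5 / 2 * π = π / 2 + 2 * π by ring]
    norm_num [sin_add_pi, sin_add_two_pi]
  · intro t ht
    rw [uIcc_of_le pi_pos.le] at ht
    simp only [sqrt_two_sub_two_cos ht.1 (by linarith [ht.2, pi_pos])]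

end SphericalCoord

end

open SphericalCoord

theorem stmt12_general (θ : ℝ) :
    -(1 / (8 * π)) * ∫ θb in (0:ℝ)..π, (∫ φ in (0:ℝ)..(2 * π),
        Real.sqrt (2 - 2 * sin θ * sin θb * cos φ - 2 * cos θ * cos θb)
          * sin θb * cos θb)
      = (2 / 15) * cos θ := by
  have hsphere : ∫ q in sphereTarget, sin q.1 • zonalKernel θ (sphereCoord q) =
      ∫ θb in (0:ℝ)..π, ∫ φ in (0:ℝ)..(2 * π),
        √(2 - 2 * sin θ * sin θb * cos φ - 2 * cos θ * cos θb) * sin θb * cos θb := by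
    simpa only [id, sin_smul_zonalKernel_sphereCoord] using
      setIntegral_sphereTarget_zonalKernel θ continuous_id
  rw [← hsphere, ← integral_sphere_comp_rotate _ θ,
    setIntegral_sphereTarget_zonalKernel θ (continuous_rotate θ)]
  simp only [integral_zonalKernel_rotate_sphereCoord]
  rw [intervalIntegral.integral_const_mul, integral_sqrt_two_sub_two_cos_mul_sin_mul_cos]
  field_simp

/-- K(θ) = −(1/8π) ∫₀^π ∫₀^{2π} √γ(θ,θ̄,φ) sin θ̄ cos θ̄ dφ dθ̄ = (2/15) cos θ. -/
theorem stmt12 (θ : ℝ) (hθ : θ ∈ Set.Icc 0 π) :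
    -(1 / (8 * π)) * ∫ θb in (0:ℝ)..π, (∫ φ in (0:ℝ)..(2 * π),
        Real.sqrt (2 - 2 * sin θ * sin θb * cos φ - 2 * cos θ * cos θb)
          * sin θb * cos θb)
      = (2 / 15) * cos θ :=
  stmt12_general θ
end
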